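/- arXiv:1708.07179 — 3 statements merged into one kernel-verified Lean document; each statement's English description precedes it below -/
import Mathlib

section
/- If H is a retract of a reflexive graph G, then the minimum number of ℓ-visibility cops needed to see the robber in H is at most that needed in G, i.e., c'_ℓ(H) ≤ c'_ℓ(G). -/
namespace CopsRobber

open Classical

noncomputable section

variable {V : Type*}

/-- Observation available to the cops: the robber's position is revealed iff some cop
is within graph distance `ℓ` of the robber. -/
def obs (G : SimpleGraph V) (ℓ : ℕ∞) {k : ℕ} (p : Fin k → V) (r : V) : Option V :=
  if ∃ i, (G.dist (p i) r : ℕ∞) ≤ ℓ then some r else none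

/-- A strategy for `k` cops on `G`: initial positions, and a move function depending on the
history of observations and the current cop positions.  Each cop moves along an edge or
passes. -/
structure CopStrategy (G : SimpleGraph V) (k : ℕ) where
  init : Fin k → V
  move : List (Option V) → (Fin k → V) → Fin k → V
  valid : ∀ h p i, move h p i = p i ∨ G.Adj (p i) (move h p i)

/-- A robber trajectory: in each round the robber moves along an edge or passes. -/
def RobberWalk (G : SimpleGraph V) (R : ℕ → V) : Prop :=
  ∀ t, R (t + 1) = R t ∨ G.Adj (R t) (R (t + 1))

/-- The play of the game: cop positions and observation history at the end of each round.
In round `t+1` the cops move first (observing the robber at his position of round `t` if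
within range), then the robber moves (and is observed at his new position if within range). -/
def play (G : SimpleGraph V) (ℓ : ℕ∞) {k : ℕ} (σ : CopStrategy G k) (R : ℕ → V) :
    ℕ → (Fin k → V) × List (Option V)
  | 0 => (σ.init, [obs G ℓ σ.init (R 0)])
  | t + 1 =>
    let s := play G ℓ σ R t
    let p := σ.move s.2 s.1
    (p, (s.2 ++ [obs G ℓ p (R t)]) ++ [obs G ℓ p (R (t + 1))])

/-- Positions of the cops at the end of round `t`. -/
def copsAt (G : SimpleGraph V) (ℓ : ℕ∞) {k : ℕ} (σ : CopStrategy G k) (R : ℕ → V)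
    (t : ℕ) : Fin k → V :=
  (play G ℓ σ R t).1

/-- The cops capture the robber: some cop occupies the robber's vertex, either
simultaneously or by moving onto it mid-round. -/
def Captures (G : SimpleGraph V) (ℓ : ℕ∞) {k : ℕ} (σ : CopStrategy G k) (R : ℕ → V) : Prop :=
  ∃ t i, copsAt G ℓ σ R t i = R t ∨ copsAt G ℓ σ R (t + 1) i = R t

/-- The cops see the robber: some cop comes within distance `ℓ` of the robber. -/
def Sees (G : SimpleGraph V) (ℓ : ℕ∞) {k : ℕ} (σ : CopStrategy G k) (R : ℕ → V) : Prop :=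
  ∃ t i, (G.dist (copsAt G ℓ σ R t i) (R t) : ℕ∞) ≤ ℓ ∨
    (G.dist (copsAt G ℓ σ R (t + 1) i) (R t) : ℕ∞) ≤ ℓ

/-- `c_ℓ(G)`: the minimum number of cops that guarantee capture of the robber in the
`ℓ`-visibility Cops and Robber game. -/
def visCopNumber (G : SimpleGraph V) (ℓ : ℕ∞) : ℕ :=
  sInf {k | ∃ σ : CopStrategy G k, ∀ R, RobberWalk G R → Captures G ℓ σ R}

/-- `c'_ℓ(G)`: the minimum number of cops that guarantee seeing the robber in the
`ℓ`-visibility Cops and Robber game. -/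
def visSeeNumber (G : SimpleGraph V) (ℓ : ℕ∞) : ℕ :=
  sInf {k | ∃ σ : CopStrategy G k, ∀ R, RobberWalk G R → Sees G ℓ σ R}

/-- The classical cop number: the game with full visibility. -/
def copNumber (G : SimpleGraph V) : ℕ := visCopNumber G ⊤

end
end CopsRobber

/-!
A retraction `f : G → H` is a homomorphism of reflexive graphs fixing `H`, so it does not
increase distances and `dist_H (f v, r) ≤ dist_G (v, r)` for `r ∈ H`. A robber walk in `H` is
also one in `G`; the `H`-cops shadow a winning team of `G`-cops under `f`. Whenever a `G`-cop
would see the robber, its shadow sees him too, so the `H`-cops can recover every observation of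
the `G`-cops, hence their moves, and they see the robber no later than the `G`-cops would.
-/

namespace CopsRobber

open Classical

variable {V W : Type*} {G : SimpleGraph V} {H : SimpleGraph W}

/-- A homomorphism of the reflexive graphs obtained from `G` and `H` by adding a loop at
every vertex. -/
def IsReflHom (G : SimpleGraph V) (H : SimpleGraph W) (f : V → W) : Prop :=
  ∀ a b, G.Adj a b → f a = f b ∨ H.Adj (f a) (f b)

namespace IsReflHom

variable {f : V → W}

theorem exists_walk_length_le (hf : IsReflHom G H f) {a b : V} (p : G.Walk a b) :
    ∃ q : H.Walk (f a) (f b), q.length ≤ p.length := by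
  induction p with
  | nil => exact ⟨.nil, le_rfl⟩
  | cons hadj _ ih =>
    obtain ⟨q, hq⟩ := ih
    rcases hf _ _ hadj with heq | hadj'
    · exact ⟨q.copy heq.symm rfl, by simpa using hq.trans (Nat.le_succ _)⟩
    · exact ⟨.cons hadj' q, by simpa using hq⟩

theorem dist_le (hf : IsReflHom G H f) {a b : V} (hab : G.Reachable a b) :
    H.dist (f a) (f b) ≤ G.dist a b := by
  obtain ⟨p, hp⟩ := hab.exists_walk_length_eq_dist
  obtain ⟨q, hq⟩ := hf.exists_walk_length_le p
  exact (SimpleGraph.dist_le q).trans (hp ▸ hq)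

theorem robberWalk_comp (hf : IsReflHom G H f) {R : ℕ → V} (hR : RobberWalk G R) :
    RobberWalk H (f ∘ R) := fun t =>
  (hR t).elim (fun h => Or.inl (congrArg f h)) fun h => (hf _ _ h).imp Eq.symm id

end IsReflHom

noncomputable section Simulation

variable (G) (ι : W → V) (ℓ : ℕ∞) {k : ℕ}

/-- `G`-cops at `q` see `ι r` only if `H`-cops at `f ∘ q` see `r` (`liftObs_obs`), so their
observation can be read off an entry of the `H`-history; the outer `Option` comes from the
lookup `h[n]?`. -/
def liftObs (q : Fin k → V) : Option (Option W) → Option V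
  | some (some r) => obs G ℓ q (ι r)
  | _ => none

/-- Positions and history of the `G`-game in round `t`, replayed from the history `h` of
the `H`-game, which holds the entries of round `t` at indices `2t - 1` and `2t`. -/
def replay (σ : CopStrategy G k) : ℕ → List (Option W) → (Fin k → V) × List (Option V)
  | 0, h => (σ.init, [liftObs G ι ℓ σ.init h[0]?])
  | t + 1, h =>
    let s := replay σ t h
    let p := σ.move s.2 s.1
    (p, (s.2 ++ [liftObs G ι ℓ p h[2 * t + 1]?]) ++ [liftObs G ι ℓ p h[2 * t + 2]?])

theorem replay_append (σ : CopStrategy G k) {t : ℕ} {h : List (Option W)}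
    (ht : 2 * t + 1 ≤ h.length) (l : List (Option W)) :
    replay G ι ℓ σ t (h ++ l) = replay G ι ℓ σ t h := by
  induction t with
  | zero => simp only [replay, List.getElem?_append_left (by omega : 0 < h.length)]
  | succ t ih =>
    simp only [replay, ih (by omega), List.getElem?_append_left (by omega : 2 * t + 1 < h.length),
      List.getElem?_append_left (by omega : 2 * t + 2 < h.length)]

end Simulation

/-- The cops on `H` play the images under `f` of the `G`-cops of the replayed game; the
fallback `p i` only serves to make every move legal on arbitrary histories. -/
noncomputable def CopStrategy.pullback {k : ℕ} (σ : CopStrategy G k) (H : SimpleGraph W)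
    (ι : W → V) (f : V → W) (ℓ : ℕ∞) :
    CopStrategy H k where
  init i := f (σ.init i)
  move h p i :=
    let s := replay G ι ℓ σ ((h.length - 1) / 2) h
    let v := f (σ.move s.2 s.1 i)
    if v = p i ∨ H.Adj (p i) v then v else p i
  valid h p i := by
    dsimp only
    split_ifs with hv
    exacts [hv, Or.inl rfl]

theorem play_snd_length {ℓ : ℕ∞} {k : ℕ} (σ : CopStrategy G k) (R : ℕ → V) (t : ℕ) :
    (play G ℓ σ R t).2.length = 2 * t + 1 := by
  induction t with
  | zero => rfl
  | succ t ih => simp only [play, List.length_append, List.length_singleton, ih]; ring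

section Retract

variable {ι : W → V} {f : V → W} {ℓ : ℕ∞} {k : ℕ}

theorem dist_le_of_leftInverse (hf : IsReflHom G H f) (hG : G.Connected)
    (hfι : Function.LeftInverse f ι) (a : V) (r : W) :
    (H.dist (f a) r : ℕ∞) ≤ G.dist a (ι r) := by
  exact_mod_cast hfι r ▸ hf.dist_le (hG.preconnected a (ι r))

theorem liftObs_obs (hf : IsReflHom G H f) (hG : G.Connected)
    (hfι : Function.LeftInverse f ι) (q : Fin k → V) (r : W) :
    liftObs G ι ℓ q (some (obs H ℓ (f ∘ q) r)) = obs G ℓ q (ι r) := by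
  by_cases hH : ∃ i, (H.dist ((f ∘ q) i) r : ℕ∞) ≤ ℓ
  · rw [obs, if_pos hH, liftObs]
  · have hG' : ¬∃ i, (G.dist (q i) (ι r) : ℕ∞) ≤ ℓ := fun ⟨i, hi⟩ =>
      hH ⟨i, (dist_le_of_leftInverse hf hG hfι (q i) r).trans hi⟩
    rw [obs, if_neg hH, obs, if_neg hG']
    rfl

theorem pullback_move (hf : IsReflHom G H f) (σ : CopStrategy G k) {t : ℕ}
    {h : List (Option W)} (ht : h.length = 2 * t + 1) (q : Fin k → V) (hist : List (Option V))
    (hrep : replay G ι ℓ σ t h = (q, hist)) :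
    (σ.pullback H ι f ℓ).move h (f ∘ q) = f ∘ σ.move hist q := by
  funext i
  have ht' : (h.length - 1) / 2 = t := by omega
  have hlegal : f (σ.move hist q i) = f (q i) ∨ H.Adj (f (q i)) (f (σ.move hist q i)) :=
    (σ.valid hist q i).elim (fun heq => Or.inl (congrArg f heq))
      fun hadj => (hf _ _ hadj).imp Eq.symm id
  simp only [CopStrategy.pullback, ht', hrep, Function.comp_apply, if_pos hlegal]

theorem play_pullback (hf : IsReflHom G H f) (hG : G.Connected)
    (hfι : Function.LeftInverse f ι) (σ : CopStrategy G k) (R : ℕ → W) (t : ℕ) :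
    (play H ℓ (σ.pullback H ι f ℓ) R t).1 = f ∘ (play G ℓ σ (ι ∘ R) t).1 ∧
      replay G ι ℓ σ t (play H ℓ (σ.pullback H ι f ℓ) R t).2 =
        play G ℓ σ (ι ∘ R) t := by
  induction t with
  | zero =>
    exact ⟨rfl, congrArg (fun o => (σ.init, [o])) (liftObs_obs hf hG hfι σ.init (R 0))⟩
  | succ t ih =>
    obtain ⟨hpos, hrep⟩ := ih
    set sH := play H ℓ (σ.pullback H ι f ℓ) R t
    set sG := play G ℓ σ (ι ∘ R) t
    have hlen : sH.2.length = 2 * t + 1 := play_snd_length _ R t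
    have hmove : (σ.pullback H ι f ℓ).move sH.2 sH.1 = f ∘ σ.move sG.2 sG.1 := by
      rw [hpos]
      exact pullback_move hf σ hlen _ _ hrep
    have hplay : play H ℓ (σ.pullback H ι f ℓ) R (t + 1) =
        (f ∘ σ.move sG.2 sG.1, (sH.2 ++ [obs H ℓ (f ∘ σ.move sG.2 sG.1) (R t)]) ++
          [obs H ℓ (f ∘ σ.move sG.2 sG.1) (R (t + 1))]) := by
      rw [← hmove]; rfl
    have hread (a b : Option W) : (sH.2 ++ ([a] ++ [b]))[2 * t + 1]? = some a ∧
        (sH.2 ++ ([a] ++ [b]))[2 * t + 2]? = some b := by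
      simp [hlen]
    rw [hplay]
    refine ⟨rfl, ?_⟩
    rw [List.append_assoc]
    simp only [replay, replay_append G ι ℓ σ hlen.ge, hrep, hread, liftObs_obs hf hG hfι]
    rfl

theorem Sees.pullback (hf : IsReflHom G H f) (hG : G.Connected)
    (hfι : Function.LeftInverse f ι) {σ : CopStrategy G k} {R : ℕ → W}
    (hsee : Sees G ℓ σ (ι ∘ R)) : Sees H ℓ (σ.pullback H ι f ℓ) R := by
  obtain ⟨t, i, hti⟩ := hsee
  have hcops (s : ℕ) :
      copsAt H ℓ (σ.pullback H ι f ℓ) R s i = f (copsAt G ℓ σ (ι ∘ R) s i) :=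
    congrFun (play_pullback hf hG hfι σ R s).1 i
  have hnear (c : V) (hc : (G.dist c (ι (R t)) : ℕ∞) ≤ ℓ) :
      (H.dist (f c) (R t) : ℕ∞) ≤ ℓ :=
    (dist_le_of_leftInverse hf hG hfι c (R t)).trans hc
  exact ⟨t, i, by simpa only [hcops] using hti.imp (hnear _) (hnear _)⟩

end Retract

theorem visSeeNumber_spec [Fintype V] (G : SimpleGraph V) (ℓ : ℕ∞) :
    ∃ σ : CopStrategy G (visSeeNumber G ℓ), ∀ R, RobberWalk G R → Sees G ℓ σ R := by
  let everywhere : CopStrategy G (Fintype.card V) :=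
    ⟨(Fintype.equivFin V).symm, fun _ p => p, fun _ _ _ => Or.inl rfl⟩
  apply Nat.sInf_mem
    (s := {k | ∃ σ : CopStrategy G k, ∀ R, RobberWalk G R → Sees G ℓ σ R})
  refine ⟨_, everywhere, fun R _ => ⟨0, Fintype.equivFin V (R 0), Or.inl ?_⟩⟩
  simp [everywhere, copsAt, play]

end CopsRobber

open CopsRobber in
theorem retract_visSeeNumber_le_general {V W : Type*} [Fintype V]
    (G : SimpleGraph V) (H : SimpleGraph W) (hG : G.Connected)
    (ι : W → V)
    (hsub : ∀ a b : W, H.Adj a b → G.Adj (ι a) (ι b))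
    (f : V → W) (hhom : ∀ a b : V, G.Adj a b → f a = f b ∨ H.Adj (f a) (f b))
    (hretr : ∀ w : W, f (ι w) = w) (ℓ : ℕ) :
    visSeeNumber H (ℓ : ℕ∞) ≤ visSeeNumber G (ℓ : ℕ∞) := by
  obtain ⟨σ, hσ⟩ := visSeeNumber_spec G ℓ
  have hι : IsReflHom H G ι := fun a b hab => Or.inr (hsub a b hab)
  exact Nat.sInf_le ⟨σ.pullback H ι f ℓ, fun R hR =>
    (hσ _ (hι.robberWalk_comp hR)).pullback hhom hG hretr⟩

open CopsRobber in
/-- If `H` is a retract of a (reflexive) graph `G`, then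
`c'_ℓ(H) ≤ c'_ℓ(G)`. -/
theorem retract_visSeeNumber_le {V W : Type*} [Fintype V] [Fintype W]
    (G : SimpleGraph V) (H : SimpleGraph W) (hG : G.Connected)
    (ι : W → V) (hinj : Function.Injective ι)
    (hsub : ∀ a b : W, H.Adj a b → G.Adj (ι a) (ι b))
    (f : V → W) (hhom : ∀ a b : V, G.Adj a b → f a = f b ∨ H.Adj (f a) (f b))
    (hretr : ∀ w : W, f (ι w) = w) (ℓ : ℕ) :
    visSeeNumber H (ℓ : ℕ∞) ≤ visSeeNumber G (ℓ : ℕ∞) :=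
  retract_visSeeNumber_le_general G H hG ι hsub f hhom hretr ℓ
end

section
/- If G is a chordal graph and ℓ ≥ 0, then c'_ℓ(G) = c_ℓ(G); moreover, once a single cop is within distance ℓ of the robber, that cop alone can capture the robber. -/
/-- `v` is a simplicial elimination ordering of `G` (written `v n, …, v 1` in the paper):
for each `i`, the neighbours of `v i` of smaller index form a clique. -/
def IsSimplicialElimOrdering {V : Type*} (G : SimpleGraph V) {n : ℕ} (v : Fin n ≃ V) : Prop :=
  ∀ i j k : Fin n, j < i → k < i → G.Adj (v i) (v j) → G.Adj (v i) (v k) → v j ≠ v k →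
    G.Adj (v j) (v k)

/-- A graph is chordal iff it admits a simplicial elimination ordering. -/
def Chordal {V : Type*} (G : SimpleGraph V) : Prop :=
  ∃ (n : ℕ) (v : Fin n ≃ V), IsSimplicialElimOrdering G v

/-!
As soon as some cop sees the robber, let every cop switch from its strategy to chasing: a
geodesic step towards the robber's last observed position, preferring his previous position
when that is also geodesic. For a cop within distance `ℓ`, its distance to the robber
(measured after the cop's move, before the robber's) never increases and keeps the robber
visible, so it is eventually a constant `m ≥ 1`. From then on the robber has to move every
round, and since the cop follows his trail, `R t` and `R (t + 2)` are always at distance `2`.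
A finite chordal graph has no such infinite walk: among the vertices it visits infinitely often,
the one eliminated last in a simplicial ordering would have two non-adjacent neighbours
eliminated before it. So seeing the robber amounts to capturing him.
-/

namespace SimpleGraph

variable {V : Type*} {G : SimpleGraph V}

lemma Reachable.exists_adj_dist_add_one_eq {c x : V} (h : G.Reachable c x) (hne : c ≠ x) :
    ∃ w, G.Adj c w ∧ G.dist w x + 1 = G.dist c x := by
  obtain ⟨p, hp⟩ := h.exists_walk_length_eq_dist
  cases p with
  | nil => exact absurd rfl hne
  | cons hadj q =>
    refine ⟨_, hadj, le_antisymm ?_ ?_⟩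
    · have := G.dist_le q
      rw [Walk.length_cons] at hp
      omega
    · have := hadj.reachable.dist_triangle_left x
      rwa [dist_eq_one_iff_adj.mpr hadj, add_comm] at this

open Classical in
noncomputable def towards (G : SimpleGraph V) (c x : V) : V :=
  if h : ∃ w, G.Adj c w ∧ G.dist w x + 1 = G.dist c x then h.choose else c

lemma towards_eq_or_adj (c x : V) : G.towards c x = c ∨ G.Adj c (G.towards c x) := by
  unfold towards
  split_ifs with h
  exacts [Or.inr h.choose_spec.1, Or.inl rfl]

lemma dist_towards_le_one (c x : V) : G.dist c (G.towards c x) ≤ 1 := by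
  rcases G.towards_eq_or_adj c x with h | h
  · simp [h]
  · exact (dist_eq_one_iff_adj.mpr h).le

lemma Reachable.dist_towards_add_one {c x : V} (h : G.Reachable c x) (hne : c ≠ x) :
    G.dist (G.towards c x) x + 1 = G.dist c x := by
  have hex := h.exists_adj_dist_add_one_eq hne
  rw [towards, dif_pos hex]
  exact hex.choose_spec.2

open Classical in
/-- A geodesic step from `c` towards `b`. When the robber has just moved from `a` to `b`
directly away from `c`, the step is taken towards `a`, which is then geodesic for both. -/
noncomputable def chaseStep (G : SimpleGraph V) (c a b : V) : V :=
  if c ≠ a ∧ G.Adj a b ∧ G.dist c b = G.dist c a + 1 then G.towards c a else G.towards c b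

lemma chaseStep_eq_or_adj (c a b : V) : G.chaseStep c a b = c ∨ G.Adj c (G.chaseStep c a b) := by
  unfold chaseStep
  split_ifs
  exacts [G.towards_eq_or_adj c a, G.towards_eq_or_adj c b]

lemma Connected.dist_chaseStep_add_one (hG : G.Connected) {c b : V} (a : V) (hne : c ≠ b) :
    G.dist (G.chaseStep c a b) b + 1 = G.dist c b := by
  unfold chaseStep
  split_ifs with h
  · obtain ⟨hca, hab, hcb⟩ := h
    have htoward := (hG c a).dist_towards_add_one hca
    have hup := hG.dist_triangle (u := G.towards c a) (v := a) (w := b)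
    have hlow := hG.dist_triangle (u := c) (v := G.towards c a) (w := b)
    have := G.dist_towards_le_one c a
    rw [dist_eq_one_iff_adj.mpr hab] at hup
    omega
  · exact (hG c b).dist_towards_add_one hne

lemma Connected.dist_chaseStep_prev_add_one (hG : G.Connected) {c a b : V} (hca : c ≠ a)
    (hab : G.Adj a b) (hcb : G.dist c b = G.dist c a + 1) :
    G.dist (G.chaseStep c a b) a + 1 = G.dist c a := by
  rw [chaseStep, if_pos ⟨hca, hab, hcb⟩]
  exact (hG c a).dist_towards_add_one hca

end SimpleGraph

open Filter in
theorem Chordal.exists_eq_or_adj_add_two {V : Type*} {G : SimpleGraph V} (hchord : Chordal G)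
    (q : ℕ → V) (hq : ∀ t, G.Adj (q t) (q (t + 1))) :
    ∃ t, q t = q (t + 2) ∨ G.Adj (q t) (q (t + 2)) := by
  obtain ⟨n, v, hv⟩ := hchord
  have : Finite V := .of_equiv _ v
  set S := {x | ∃ᶠ t in atTop, q t = x}
  have hS : ∀ᶠ t in atTop, q t ∈ S := by
    have : ∀ᶠ t in atTop, ∀ x, q t = x → x ∈ S := eventually_all.2 fun x => by
      by_cases hx : x ∈ S
      · exact .of_forall fun _ _ => hx
      · exact (not_frequently.1 hx).mono fun _ hne heq => absurd heq hne
    exact this.mono fun t h => h _ rfl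
  obtain ⟨N, hN⟩ := eventually_atTop.1 hS
  -- the recurrent vertex eliminated last: its two neighbours along `q` are eliminated before it
  obtain ⟨x, hxS, hmax⟩ := Set.exists_max_image S v.symm S.toFinite ⟨q N, hN N le_rfl⟩
  obtain ⟨b, hb, hqb⟩ := frequently_atTop.1 hxS (N + 1)
  obtain ⟨t, rfl⟩ : ∃ t, b = t + 1 := ⟨b - 1, by omega⟩
  refine ⟨t, or_iff_not_imp_left.2 fun hne => ?_⟩
  have hprev : G.Adj x (q t) := hqb ▸ (hq t).symm
  have hnext : G.Adj x (q (t + 2)) := hqb ▸ hq (t + 1)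
  have earlier : ∀ y, G.Adj x y → y ∈ S → v.symm y < v.symm x := fun y hxy hy =>
    (hmax y hy).lt_of_ne fun h => hxy.ne (v.symm.injective h).symm
  simpa using hv (v.symm x) (v.symm (q t)) (v.symm (q (t + 2)))
    (earlier _ hprev (hN t (by omega))) (earlier _ hnext (hN _ (by omega)))
    (by simpa using hprev) (by simpa using hnext) (by simpa using hne)

namespace CopsRobber

variable {V : Type*} {G : SimpleGraph V} {k : ℕ}

def lastObs (h : List (Option V)) : Option V := h.getLast?.join

def prevObs (h : List (Option V)) : Option V := h.dropLast.getLast?.join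

def CopStrategy.stay (p : Fin k → V) : CopStrategy G k :=
  ⟨p, fun _ q => q, fun _ _ _ => Or.inl rfl⟩

/-- Play `σ` until the robber is seen; from then on every cop chases his last observed
position, `prevObs` being his position before his last move. -/
noncomputable def CopStrategy.chaseMove (σ : CopStrategy G k) (h : List (Option V))
    (p : Fin k → V) (i : Fin k) : V :=
  match lastObs h, prevObs h with
  | some b, a => G.chaseStep (p i) (a.getD b) b
  | none, some b => G.towards (p i) b
  | none, none => σ.move h p i

noncomputable def CopStrategy.thenChase (σ : CopStrategy G k) : CopStrategy G k where
  init := σ.init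
  move := σ.chaseMove
  valid h p i := by
    unfold chaseMove
    split
    · exact G.chaseStep_eq_or_adj _ _ _
    · exact G.towards_eq_or_adj _ _
    · exact σ.valid h p i

lemma CopStrategy.chaseMove_of_lastObs_eq_some {σ : CopStrategy G k} {h : List (Option V)}
    {b : V} (hb : lastObs h = some b) (p : Fin k → V) (i : Fin k) :
    σ.chaseMove h p i = G.chaseStep (p i) ((prevObs h).getD b) b := by
  simp only [chaseMove, hb]

lemma CopStrategy.chaseMove_of_prevObs_eq_some {σ : CopStrategy G k} {h : List (Option V)}
    {b : V} (hlast : lastObs h = none) (hb : prevObs h = some b) (p : Fin k → V) (i : Fin k) :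
    σ.chaseMove h p i = G.towards (p i) b := by
  simp only [chaseMove, hlast, hb]

lemma CopStrategy.chaseMove_of_not_seen {σ : CopStrategy G k} {h : List (Option V)}
    (hlast : lastObs h = none) (hprev : prevObs h = none) : σ.chaseMove h = σ.move h := by
  funext p i
  simp only [chaseMove, hlast, hprev]

lemma RobberWalk.dist_succ_le_one {R : ℕ → V} (hR : RobberWalk G R) (t : ℕ) :
    G.dist (R t) (R (t + 1)) ≤ 1 := by
  rcases hR t with h | h
  · simp [h]
  · exact (SimpleGraph.dist_eq_one_iff_adj.mpr h).le

lemma Captures.sees {ℓ : ℕ∞} {σ : CopStrategy G k} {R : ℕ → V} (h : Captures G ℓ σ R) :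
    Sees G ℓ σ R := by
  obtain ⟨t, i, h | h⟩ := h <;> exact ⟨t, i, by simp [h]⟩

variable (ℓ : ℕ∞) (σ : CopStrategy G k) (R : ℕ → V)

lemma obs_eq_some {p : Fin k → V} {r : V} (h : ∃ i, (G.dist (p i) r : ℕ∞) ≤ ℓ) :
    obs G ℓ p r = some r := if_pos h

lemma obs_eq_none {p : Fin k → V} {r : V} (h : ¬ ∃ i, (G.dist (p i) r : ℕ∞) ≤ ℓ) :
    obs G ℓ p r = none := if_neg h

lemma copsAt_succ (t : ℕ) :
    copsAt G ℓ σ R (t + 1) = σ.move (play G ℓ σ R t).2 (copsAt G ℓ σ R t) := rfl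

lemma lastObs_play (t : ℕ) :
    lastObs (play G ℓ σ R t).2 = obs G ℓ (copsAt G ℓ σ R t) (R t) := by
  cases t <;> simp [play, copsAt, lastObs]

lemma prevObs_play_zero : prevObs (play G ℓ σ R 0).2 = none := by
  simp [play, prevObs]

lemma prevObs_play_succ (t : ℕ) :
    prevObs (play G ℓ σ R (t + 1)).2 = obs G ℓ (copsAt G ℓ σ R (t + 1)) (R t) := by
  simp [play, copsAt, prevObs]

variable {ℓ σ R}

local notation "cop" => copsAt G ℓ σ.thenChase R

lemma copsAt_thenChase_succ_of_sees {t : ℕ}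
    (h : ∃ j, (G.dist (cop t j) (R t) : ℕ∞) ≤ ℓ) (i : Fin k) :
    cop (t + 1) i = G.chaseStep (cop t i)
      ((prevObs (play G ℓ σ.thenChase R t).2).getD (R t)) (R t) := by
  rw [copsAt_succ]
  exact CopStrategy.chaseMove_of_lastObs_eq_some (by rw [lastObs_play, obs_eq_some ℓ h]) _ i

lemma copsAt_thenChase_succ_of_sees_prev {t : ℕ}
    (hlast : ¬ ∃ j, (G.dist (cop (t + 1) j) (R (t + 1)) : ℕ∞) ≤ ℓ)
    (hprev : ∃ j, (G.dist (cop (t + 1) j) (R t) : ℕ∞) ≤ ℓ) (i : Fin k) :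
    cop (t + 2) i = G.towards (cop (t + 1) i) (R t) := by
  rw [copsAt_succ]
  exact CopStrategy.chaseMove_of_prevObs_eq_some (by rw [lastObs_play, obs_eq_none ℓ hlast])
    (by rw [prevObs_play_succ, obs_eq_some ℓ hprev]) _ i

lemma play_thenChase_eq_of_not_sees (h : ¬ Sees G ℓ σ.thenChase R) (t : ℕ) :
    play G ℓ σ.thenChase R t = play G ℓ σ R t := by
  induction t with
  | zero => rfl
  | succ t ih =>
    have hlast : lastObs (play G ℓ σ.thenChase R t).2 = none := by
      rw [lastObs_play, obs_eq_none]
      exact fun ⟨i, hi⟩ => h ⟨t, i, Or.inl hi⟩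
    have hprev : prevObs (play G ℓ σ.thenChase R t).2 = none := by
      cases t with
      | zero => exact prevObs_play_zero ..
      | succ t =>
        rw [prevObs_play_succ, obs_eq_none]
        exact fun ⟨i, hi⟩ => h ⟨t, i, Or.inr hi⟩
    have hmove : σ.thenChase.move (play G ℓ σ.thenChase R t).2 (play G ℓ σ.thenChase R t).1 =
        σ.move (play G ℓ σ R t).2 (play G ℓ σ R t).1 := by
      rw [← ih]
      exact congrFun (CopStrategy.chaseMove_of_not_seen hlast hprev) _
    rw [play, play, hmove, ih]

theorem Sees.thenChase (h : Sees G ℓ σ R) : Sees G ℓ σ.thenChase R := by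
  by_contra hns
  have hcops (t : ℕ) : copsAt G ℓ σ R t = cop t := by
    simp only [copsAt, play_thenChase_eq_of_not_sees hns]
  simp only [Sees, hcops] at h
  exact hns h

section Chase

variable {i : Fin k}

lemma dist_copsAt_thenChase_succ_le_of_sees (hG : G.Connected)
    (hnc : ¬ Captures G ℓ σ.thenChase R) {t : ℕ} (h : (G.dist (cop t i) (R t) : ℕ∞) ≤ ℓ) :
    (G.dist (cop (t + 1) i) (R t) : ℕ∞) ≤ ℓ := by
  rw [copsAt_thenChase_succ_of_sees ⟨i, h⟩ i]
  have := hG.dist_chaseStep_add_one ((prevObs (play G ℓ σ.thenChase R t).2).getD (R t))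
    fun h => hnc ⟨t, i, Or.inl h⟩
  exact le_trans (by exact_mod_cast (by omega)) h

lemma dist_copsAt_thenChase_add_two_le (hG : G.Connected) (hR : RobberWalk G R)
    (hnc : ¬ Captures G ℓ σ.thenChase R) {t : ℕ}
    (h : (G.dist (cop (t + 1) i) (R t) : ℕ∞) ≤ ℓ) :
    G.dist (cop (t + 2) i) (R (t + 1)) ≤ G.dist (cop (t + 1) i) (R t) := by
  have hrobber := hR.dist_succ_le_one t
  by_cases hlast : ∃ j, (G.dist (cop (t + 1) j) (R (t + 1)) : ℕ∞) ≤ ℓ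
  · rw [show t + 2 = t + 1 + 1 from rfl, copsAt_thenChase_succ_of_sees hlast i]
    have := hG.dist_chaseStep_add_one ((prevObs (play G ℓ σ.thenChase R (t + 1)).2).getD
      (R (t + 1))) fun h => hnc ⟨t + 1, i, Or.inl h⟩
    have := hG.dist_triangle (u := cop (t + 1) i) (v := R t) (w := R (t + 1))
    omega
  · rw [copsAt_thenChase_succ_of_sees_prev hlast ⟨i, h⟩ i]
    have := (hG _ _).dist_towards_add_one fun h => hnc ⟨t, i, Or.inr h⟩
    have := hG.dist_triangle (u := G.towards (cop (t + 1) i) (R t)) (v := R t) (w := R (t + 1))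
    omega

lemma exists_dist_copsAt_thenChase_eventually_const (hG : G.Connected) (hR : RobberWalk G R)
    (hnc : ¬ Captures G ℓ σ.thenChase R) {t₀ : ℕ}
    (h₀ : (G.dist (cop (t₀ + 1) i) (R t₀) : ℕ∞) ≤ ℓ) :
    ∃ T m : ℕ, (m : ℕ∞) ≤ ℓ ∧ ∀ t ≥ T, G.dist (cop (t + 1) i) (R t) = m := by
  have within : ∀ t ≥ t₀, (G.dist (cop (t + 1) i) (R t) : ℕ∞) ≤ ℓ :=
    fun t ht => Nat.le_induction h₀
      (fun t _ ih => le_trans (by exact_mod_cast dist_copsAt_thenChase_add_two_le hG hR hnc ih) ih)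
      t ht
  have anti : Antitone fun j => G.dist (cop (t₀ + j + 1) i) (R (t₀ + j)) :=
    antitone_nat_of_succ_le fun j =>
      dist_copsAt_thenChase_add_two_le hG hR hnc (within _ le_self_add)
  obtain ⟨n, hn⟩ := WellFoundedLT.antitone_chain_condition anti
  refine ⟨t₀ + n, G.dist (cop (t₀ + n + 1) i) (R (t₀ + n)), within _ le_self_add, fun t ht => ?_⟩
  obtain ⟨j, rfl⟩ := Nat.exists_eq_add_of_le ht
  simpa [add_assoc] using (hn (n + j) le_self_add).symm

section SteadyChase

variable {T m : ℕ}

lemma dist_copsAt_thenChase_succ_succ_eq (hG : G.Connected) (hR : RobberWalk G R)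
    (hnc : ¬ Captures G ℓ σ.thenChase R) (hmℓ : (m : ℕ∞) ≤ ℓ)
    (hm : ∀ t ≥ T, G.dist (cop (t + 1) i) (R t) = m) {t : ℕ} (ht : T ≤ t) :
    G.dist (cop (t + 1) i) (R (t + 1)) = m + 1 := by
  have := hG.dist_triangle (u := cop (t + 1) i) (v := R t) (w := R (t + 1))
  have := hR.dist_succ_le_one t
  have := hm t ht
  by_cases hlast : ∃ j, (G.dist (cop (t + 1) j) (R (t + 1)) : ℕ∞) ≤ ℓ
  · have hstep := hG.dist_chaseStep_add_one ((prevObs (play G ℓ σ.thenChase R (t + 1)).2).getD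
      (R (t + 1))) fun h => hnc ⟨t + 1, i, Or.inl h⟩
    rw [← copsAt_thenChase_succ_of_sees hlast i, hm (t + 1) (by omega)] at hstep
    omega
  · have : m < G.dist (cop (t + 1) i) (R (t + 1)) := by
      exact_mod_cast hmℓ.trans_lt (not_le.1 (not_exists.1 hlast i))
    omega

lemma adj_succ_of_dist_copsAt_thenChase_eq (hG : G.Connected) (hR : RobberWalk G R)
    (hnc : ¬ Captures G ℓ σ.thenChase R) (hmℓ : (m : ℕ∞) ≤ ℓ)
    (hm : ∀ t ≥ T, G.dist (cop (t + 1) i) (R t) = m) {t : ℕ} (ht : T ≤ t) :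
    G.Adj (R t) (R (t + 1)) := by
  refine (hR t).resolve_left fun hstay => ?_
  have := dist_copsAt_thenChase_succ_succ_eq hG hR hnc hmℓ hm ht
  rw [hstay, hm t ht] at this
  omega

lemma dist_copsAt_thenChase_add_two_add_one (hG : G.Connected) (hR : RobberWalk G R)
    (hnc : ¬ Captures G ℓ σ.thenChase R) (hmℓ : (m : ℕ∞) ≤ ℓ)
    (hm : ∀ t ≥ T, G.dist (cop (t + 1) i) (R t) = m) {t : ℕ} (ht : T ≤ t) :
    G.dist (cop (t + 2) i) (R t) + 1 = m := by
  have hne : cop (t + 1) i ≠ R t := fun h => hnc ⟨t, i, Or.inr h⟩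
  have hsees : ∃ j, (G.dist (cop (t + 1) j) (R t) : ℕ∞) ≤ ℓ := ⟨i, by rw [hm t ht]; exact hmℓ⟩
  rw [← hm t ht]
  by_cases hlast : ∃ j, (G.dist (cop (t + 1) j) (R (t + 1)) : ℕ∞) ≤ ℓ
  · rw [show t + 2 = t + 1 + 1 from rfl, copsAt_thenChase_succ_of_sees hlast i,
      prevObs_play_succ, obs_eq_some ℓ hsees, Option.getD_some]
    refine hG.dist_chaseStep_prev_add_one hne
      (adj_succ_of_dist_copsAt_thenChase_eq hG hR hnc hmℓ hm ht) ?_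
    rw [dist_copsAt_thenChase_succ_succ_eq hG hR hnc hmℓ hm ht, hm t ht]
  · rw [copsAt_thenChase_succ_of_sees_prev hlast hsees i]
    exact (hG _ _).dist_towards_add_one hne

lemma dist_add_two_of_dist_copsAt_thenChase_eq (hG : G.Connected) (hR : RobberWalk G R)
    (hnc : ¬ Captures G ℓ σ.thenChase R) (hmℓ : (m : ℕ∞) ≤ ℓ)
    (hm : ∀ t ≥ T, G.dist (cop (t + 1) i) (R t) = m) {t : ℕ} (ht : T ≤ t) :
    G.dist (R t) (R (t + 2)) = 2 := by
  have : G.dist (cop (t + 2) i) (R (t + 2)) = m + 1 :=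
    dist_copsAt_thenChase_succ_succ_eq hG hR hnc hmℓ hm (t := t + 1) (by omega)
  have := dist_copsAt_thenChase_add_two_add_one hG hR hnc hmℓ hm ht
  have := hG.dist_triangle (u := cop (t + 2) i) (v := R t) (w := R (t + 2))
  have := hG.dist_triangle (u := R t) (v := R (t + 1)) (w := R (t + 2))
  have := hR.dist_succ_le_one t
  have : G.dist (R (t + 1)) (R (t + 2)) ≤ 1 := hR.dist_succ_le_one (t + 1)
  omega

end SteadyChase

theorem Sees.captures_thenChase (hG : G.Connected) (hchord : Chordal G) (hR : RobberWalk G R)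
    (h : Sees G ℓ σ.thenChase R) : Captures G ℓ σ.thenChase R := by
  by_contra hnc
  obtain ⟨t₀, i, h₀⟩ : ∃ t₀ i, (G.dist (cop (t₀ + 1) i) (R t₀) : ℕ∞) ≤ ℓ := by
    obtain ⟨t, i, h | h⟩ := h
    exacts [⟨t, i, dist_copsAt_thenChase_succ_le_of_sees hG hnc h⟩, ⟨t, i, h⟩]
  obtain ⟨T, m, hmℓ, hm⟩ := exists_dist_copsAt_thenChase_eventually_const hG hR hnc h₀
  obtain ⟨t, hshort⟩ := hchord.exists_eq_or_adj_add_two (fun j => R (T + j))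
    fun j => adj_succ_of_dist_copsAt_thenChase_eq hG hR hnc hmℓ hm (t := T + j) le_self_add
  have := dist_add_two_of_dist_copsAt_thenChase_eq hG hR hnc hmℓ hm (t := T + t) le_self_add
  rw [← add_assoc] at hshort
  rcases hshort with heq | hadj
  · rw [← heq, SimpleGraph.dist_self] at this
    omega
  · rw [SimpleGraph.dist_eq_one_iff_adj.mpr hadj] at this
    omega

end Chase

end CopsRobber

open CopsRobber in
theorem chordal_visSeeNumber_eq_visCopNumber_general {V : Type*} (G : SimpleGraph V)
    (hG : G.Connected) (hchord : Chordal G) (ℓ : ℕ) :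
    visSeeNumber G (ℓ : ℕ∞) = visCopNumber G (ℓ : ℕ∞) ∧
    ∀ u r : V, G.dist u r ≤ ℓ →
      ∃ σ : CopStrategy G 1, σ.init 0 = u ∧
        ∀ R : ℕ → V, RobberWalk G R → R 0 = r → Captures G (ℓ : ℕ∞) σ R := by
  refine ⟨congrArg sInf (Set.ext fun k => ⟨fun ⟨σ, hσ⟩ => ?_, fun ⟨σ, hσ⟩ => ?_⟩), ?_⟩
  · exact ⟨σ.thenChase, fun R hR => (hσ R hR).thenChase.captures_thenChase hG hchord hR⟩
  · exact ⟨σ, fun R hR => (hσ R hR).sees⟩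
  · intro u r hur
    refine ⟨(CopStrategy.stay fun _ => u).thenChase, rfl, fun R hR hR0 => ?_⟩
    refine Sees.captures_thenChase hG hchord hR ⟨0, 0, Or.inl ?_⟩
    rw [hR0]
    exact_mod_cast hur

open CopsRobber in
/-- if `G` is chordal and `ℓ ≥ 0`, then `c'_ℓ(G) = c_ℓ(G)`; moreover, once a
single cop is within distance `ℓ` of the robber, that cop alone can capture the robber. -/
theorem chordal_visSeeNumber_eq_visCopNumber {V : Type*} [Fintype V] (G : SimpleGraph V)
    (hG : G.Connected) (hchord : Chordal G) (ℓ : ℕ) :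
    visSeeNumber G (ℓ : ℕ∞) = visCopNumber G (ℓ : ℕ∞) ∧
    ∀ u r : V, G.dist u r ≤ ℓ →
      ∃ σ : CopStrategy G 1, σ.init 0 = u ∧
        ∀ R : ℕ → V, RobberWalk G R → R 0 = r → Captures G (ℓ : ℕ∞) σ R :=
  chordal_visSeeNumber_eq_visCopNumber_general G hG hchord ℓ
end

section
/- If T is a tree of height at most 2ℓ+1 (i.e., there exists a root r whose eccentricity is at most 2ℓ+1), then one ℓ-visibility cop suffices: c_ℓ(T) = 1. -/
/-!
Root the tree at `r`. Until he sees the robber, the cop walks a depth-first tour of all vertices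
of depth at most `ℓ + 1`. An unseen robber can never stand on the vertex `u` whose subtree is
being toured, so he stays below a single child of `u`; following him down, the cop reaches a
vertex of depth `ℓ + 1` above the robber, who is then within distance `ℓ` by the height bound.
From the first sighting on, the cop steps towards the last seen position and keeps the robber in
sight (possibly half a round late). In a tree, a robber who is not caught must then move away
from the cop's starting point at unit speed, which a tree of bounded height forbids.
-/

namespace SimpleGraph

variable {V : Type*} {G : SimpleGraph V}

namespace Walk

lemma getVert_succ_eq_or_adj {u v : V} (w : G.Walk u v) (i : ℕ) :
    w.getVert (i + 1) = w.getVert i ∨ G.Adj (w.getVert i) (w.getVert (i + 1)) := by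
  rcases lt_or_ge i w.length with h | h
  · exact Or.inr (w.adj_getVert_succ h)
  · left
    rw [w.getVert_of_length_le h, w.getVert_of_length_le (by omega)]

lemma IsSubwalk.exists_getVert_add_eq {u v u' v' : V} {p : G.Walk u v} {q : G.Walk u' v'}
    (h : p.IsSubwalk q) :
    ∃ j, j + p.length ≤ q.length ∧ ∀ k ≤ p.length, q.getVert (j + k) = p.getVert k := by
  obtain ⟨ru, rv, rfl⟩ := h
  refine ⟨ru.length, by simp [length_append], fun k hk => ?_⟩
  rw [getVert_append', if_pos (by simp [length_append]; omega), getVert_append, if_neg (by omega),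
    Nat.add_sub_cancel_left]

lemma isSubwalk_foldr_append {α : Type*} {u : V} (f : α → G.Walk u u) {l : List α} {a : α}
    (ha : a ∈ l) : (f a).IsSubwalk (l.foldr (fun b w => (f b).append w) nil) := by
  induction l with
  | nil => simp at ha
  | cons b l ih =>
    rcases List.mem_cons.mp ha with rfl | ha
    · exact isSubwalk_of_append_left rfl
    · exact (ih ha).trans (isSubwalk_of_append_right rfl)

lemma mem_support_foldr_append {α : Type*} {u v : V} (f : α → G.Walk u u) {l : List α}
    (hv : v ∈ (l.foldr (fun b w => (f b).append w) nil).support) :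
    v = u ∨ ∃ a ∈ l, v ∈ (f a).support := by
  induction l with
  | nil => simpa using hv
  | cons b l ih =>
    rcases (mem_support_append_iff _ _).mp hv with hv | hv
    · exact Or.inr ⟨b, List.mem_cons_self, hv⟩
    · obtain rfl | ⟨a, ha, hva⟩ := ih hv
      · exact Or.inl rfl
      · exact Or.inr ⟨a, List.mem_cons_of_mem b ha, hva⟩

end Walk

namespace Connected

variable (hG : G.Connected)

noncomputable def shortestWalk (a b : V) : G.Walk a b :=
  (hG.exists_walk_length_eq_dist a b).choose

lemma length_shortestWalk (a b : V) : (hG.shortestWalk a b).length = G.dist a b :=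
  (hG.exists_walk_length_eq_dist a b).choose_spec

noncomputable def stepToward (a b : V) : V :=
  (hG.shortestWalk a b).snd

lemma stepToward_self (a : V) : hG.stepToward a a = a := by
  rw [stepToward, Walk.snd, Walk.getVert_of_length_le _ (by simp [length_shortestWalk])]

variable {hG} {a b : V}

lemma adj_stepToward (hab : a ≠ b) : G.Adj a (hG.stepToward a b) :=
  Walk.adj_snd (Walk.not_nil_of_ne hab)

lemma dist_stepToward_add_one (hab : a ≠ b) : G.dist (hG.stepToward a b) b + 1 = G.dist a b := by
  have hle : G.dist (hG.stepToward a b) b ≤ (hG.shortestWalk a b).tail.length := dist_le _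
  have htail := Walk.length_tail_add_one (Walk.not_nil_of_ne (p := hG.shortestWalk a b) hab)
  have htri := hG.dist_triangle (u := a) (v := hG.stepToward a b) (w := b)
  rw [dist_eq_one_iff_adj.mpr (adj_stepToward hab)] at htri
  rw [length_shortestWalk] at htail
  omega

lemma stepToward_of_adj (h : G.Adj a b) : hG.stepToward a b = b := by
  have hw := hG.length_shortestWalk a b
  rw [dist_eq_one_iff_adj.mpr h] at hw
  rw [stepToward, Walk.snd, ← hw, Walk.getVert_length]

lemma stepToward_eq_or_adj (a b : V) : hG.stepToward a b = a ∨ G.Adj a (hG.stepToward a b) := by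
  by_cases hab : a = b
  · exact Or.inl (hab ▸ hG.stepToward_self a)
  · exact Or.inr (adj_stepToward hab)

lemma dist_stepToward_le (hab : a ≠ b) {b' : V} (hb' : b' = b ∨ G.Adj b b') :
    G.dist (hG.stepToward a b) b' ≤ G.dist a b := by
  have h := dist_stepToward_add_one (hG := hG) hab
  rcases hb' with rfl | hb'
  · omega
  · have := hG.dist_triangle (u := hG.stepToward a b) (v := b) (w := b')
    rw [dist_eq_one_iff_adj.mpr hb'] at this
    omega

lemma dist_le_of_stepToward {q x : ℕ → V} (hq : ∀ k, q (k + 1) = hG.stepToward (q k) (x k))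
    (k : ℕ) : G.dist (q 0) (q k) ≤ k := by
  induction k with
  | zero => simp
  | succ k ih =>
    have htri := hG.dist_triangle (u := q 0) (v := q k) (w := q (k + 1))
    rcases stepToward_eq_or_adj (hG := hG) (q k) (x k) with h | h <;> rw [← hq k] at h
    · rw [h] at htri ⊢; omega
    · rw [dist_eq_one_iff_adj.mpr h] at htri; omega

end Connected

section Rooted

variable {r u c v : V}

/-- `v` lies in the subtree of `u` when `G` is rooted at `r`. -/
def IsDescendant (G : SimpleGraph V) (r u v : V) : Prop :=
  G.dist r v = G.dist r u + G.dist u v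

def IsChild (G : SimpleGraph V) (r u c : V) : Prop :=
  G.Adj u c ∧ G.dist r c = G.dist r u + 1

lemma isDescendant_root (r v : V) : G.IsDescendant r r v := by
  simp [IsDescendant]

lemma isDescendant_self (r u : V) : G.IsDescendant r u u := by
  simp [IsDescendant]

lemma IsChild.isDescendant (h : G.IsChild r u c) : G.IsDescendant r u c := by
  rw [IsDescendant, dist_eq_one_iff_adj.mpr h.1]
  exact h.2

lemma IsDescendant.trans (hG : G.Connected) (h₁ : G.IsDescendant r u c)
    (h₂ : G.IsDescendant r c v) : G.IsDescendant r u v := by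
  have := hG.dist_triangle (u := u) (v := c) (w := v)
  have := hG.dist_triangle (u := r) (v := u) (w := v)
  unfold IsDescendant at *
  omega

lemma Connected.exists_isChild_isDescendant (hG : G.Connected) (h : G.IsDescendant r u v)
    (hvu : v ≠ u) : ∃ c, G.IsChild r u c ∧ G.IsDescendant r c v := by
  have hadj := Connected.adj_stepToward (hG := hG) hvu.symm
  have hdist := Connected.dist_stepToward_add_one (hG := hG) hvu.symm
  have h₁ := hG.dist_triangle (u := r) (v := u) (w := hG.stepToward u v)
  have h₂ := hG.dist_triangle (u := r) (v := hG.stepToward u v) (w := v)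
  rw [dist_eq_one_iff_adj.mpr hadj] at h₁
  unfold IsDescendant at h ⊢
  exact ⟨hG.stepToward u v, ⟨hadj, by omega⟩, by omega⟩

lemma IsTree.eq_of_adj_of_dist_add_one (hT : G.IsTree) {x a b z : V} (ha : G.Adj a z)
    (hb : G.Adj b z) (hda : G.dist x a + 1 = G.dist x z) (hdb : G.dist x b + 1 = G.dist x z) :
    a = b := by
  have hpa : ((hT.connected.shortestWalk x a).concat ha).IsPath :=
    Walk.isPath_of_length_eq_dist _ (by simp [Connected.length_shortestWalk, hda])
  have hpb : ((hT.connected.shortestWalk x b).concat hb).IsPath :=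
    Walk.isPath_of_length_eq_dist _ (by simp [Connected.length_shortestWalk, hdb])
  have := (hT.isAcyclic.subsingleton_path x z).elim ⟨_, hpa⟩ ⟨_, hpb⟩
  exact (Walk.concat_inj (congrArg Subtype.val this)).1

lemma IsTree.isDescendant_or_eq_of_adj (hT : G.IsTree) (hc : G.IsChild r u c) {x y : V}
    (hx : G.IsDescendant r c x) (hxy : G.Adj x y) : G.IsDescendant r c y ∨ y = u := by
  have hG := hT.connected
  have hcy := hG.dist_triangle (u := c) (v := x) (w := y)
  have hry := hG.dist_triangle (u := r) (v := c) (w := y)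
  rw [dist_eq_one_iff_adj.mpr hxy] at hcy
  unfold IsDescendant at hx ⊢
  rcases hT.dist_eq_dist_add_one_of_adj r hxy with hup | hdown
  · by_cases hxc : x = c
    · subst hxc
      exact Or.inr (hT.eq_of_adj_of_dist_add_one hxy.symm hc.1 hup.symm hc.2.symm)
    · have hw := Connected.adj_stepToward (hG := hG) hxc
      have hwc := Connected.dist_stepToward_add_one (hG := hG) hxc
      have hrw := hG.dist_triangle (u := r) (v := c) (w := hG.stepToward x c)
      have hrx := hG.dist_triangle (u := r) (v := hG.stepToward x c) (w := x)
      rw [dist_comm (u := hG.stepToward x c), dist_comm (u := x)] at hwc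
      rw [dist_comm (u := hG.stepToward x c), dist_eq_one_iff_adj.mpr hw] at hrx
      have hwy : hG.stepToward x c = y :=
        hT.eq_of_adj_of_dist_add_one hw.symm hxy.symm (by omega) hup.symm
      rw [← hwy] at hup ⊢
      exact Or.inl (by omega)
  · exact Or.inl (by omega)

/-- Were `x'` closer to `o`, it would be the neighbour of `x` towards the cop: `q` if the cop has
stepped onto `x`, and otherwise a vertex at distance `G.dist q x - 2` from the cop. -/
lemma IsTree.dist_add_one_of_flee (hT : G.IsTree) {o q x x' : V}
    (hox : G.dist o q + G.dist q x ≤ G.dist o x) (hqx : q ≠ x) (hxx' : G.Adj x x')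
    (hswap : hT.connected.stepToward q x = x → x' ≠ q)
    (hd : G.dist (hT.connected.stepToward q x) x' = G.dist q x) :
    G.dist o x' = G.dist o x + 1 := by
  have hG := hT.connected
  have hy := Connected.dist_stepToward_add_one (hG := hG) hqx
  have hqy := Connected.adj_stepToward (hG := hG) hqx
  set y := hG.stepToward q x
  refine (hT.dist_eq_dist_add_one_of_adj o hxx').resolve_left fun hcloser => ?_
  by_cases hyx : y = x
  · rw [hyx] at hqy
    have htri := hG.dist_triangle (u := o) (v := q) (w := x)
    rw [dist_eq_one_iff_adj.mpr hqy] at htri hox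
    exact hswap hyx (hT.eq_of_adj_of_dist_add_one hxx'.symm hqy hcloser.symm (by omega))
  · have hz := Connected.adj_stepToward (hG := hG) (Ne.symm hyx)
    have hzy := Connected.dist_stepToward_add_one (hG := hG) (Ne.symm hyx)
    set z := hG.stepToward x y
    have h₁ := hG.dist_triangle (u := o) (v := q) (w := y)
    have h₂ := hG.dist_triangle (u := o) (v := y) (w := z)
    have h₃ := hG.dist_triangle (u := o) (v := z) (w := x)
    rw [dist_eq_one_iff_adj.mpr hqy] at h₁
    rw [dist_comm (u := z), dist_eq_one_iff_adj.mpr hz] at h₃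
    rw [dist_comm (u := y)] at h₂
    rw [dist_comm (u := x)] at hzy
    have hzx' : z = x' := hT.eq_of_adj_of_dist_add_one hz.symm hxx'.symm (by omega) hcloser.symm
    rw [← hzx', dist_comm] at hd
    omega

end Rooted

section DepthFirst

variable [Fintype V] {G : SimpleGraph V} {r : V}

open Classical in
noncomputable def children (G : SimpleGraph V) (r u : V) : List {c // G.IsChild r u c} :=
  Finset.univ.toList

noncomputable def dfsWalk (G : SimpleGraph V) (r : V) : ℕ → (u : V) → G.Walk u u
  | 0, _ => .nil
  | n + 1, u => (G.children r u).foldr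
      (fun (c : {c // G.IsChild r u c}) w =>
        (((G.dfsWalk r n c).cons c.2.1).concat c.2.1.symm).append w) .nil

lemma mem_children {u c : V} (hc : G.IsChild r u c) : ⟨c, hc⟩ ∈ G.children r u := by
  classical
  exact Finset.mem_toList.mpr (Finset.mem_univ _)

lemma isSubwalk_dfsWalk {n : ℕ} {u c : V} (hc : G.IsChild r u c) :
    (G.dfsWalk r n c).IsSubwalk (G.dfsWalk r (n + 1) u) :=
  ((Walk.isSubwalk_cons _ hc.1).concat hc.1.symm).trans <|
    Walk.isSubwalk_foldr_append _ (mem_children hc)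

lemma Connected.mem_support_dfsWalk (hG : G.Connected) :
    ∀ {n : ℕ} {u v : V}, v ∈ (G.dfsWalk r n u).support →
      G.IsDescendant r u v ∧ G.dist r v ≤ G.dist r u + n
  | 0, u, v, hv => by
    obtain rfl : v = u := by simpa [dfsWalk] using hv
    exact ⟨isDescendant_self r v, by omega⟩
  | n + 1, u, v, hv => by
    rcases Walk.mem_support_foldr_append _ hv with rfl | ⟨c, -, hvc⟩
    · exact ⟨isDescendant_self r v, by omega⟩
    · simp only [Walk.support_concat, Walk.support_cons, List.mem_append, List.mem_cons,
        List.not_mem_nil, or_false] at hvc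
      rcases hvc with (rfl | hvc) | rfl
      · exact ⟨isDescendant_self r v, by omega⟩
      · have ⟨hcv, hdv⟩ := hG.mem_support_dfsWalk hvc
        exact ⟨c.2.isDescendant.trans hG hcv, by have := c.2.2; omega⟩
      · exact ⟨isDescendant_self r v, by omega⟩

lemma IsTree.dist_getVert_dfsWalk_le (hT : G.IsTree) {ℓ n : ℕ} {u : V}
    (hu : G.dist r u + n = ℓ + 1) {k : ℕ} (hk : k < (G.dfsWalk r n u).length) :
    G.dist ((G.dfsWalk r n u).getVert k) u ≤ ℓ ∨
      G.dist ((G.dfsWalk r n u).getVert (k + 1)) u ≤ ℓ := by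
  have hadj := (G.dfsWalk r n u).adj_getVert_succ hk
  obtain ⟨h₁, h₁'⟩ := hT.connected.mem_support_dfsWalk ((G.dfsWalk r n u).getVert_mem_support k)
  obtain ⟨h₂, h₂'⟩ :=
    hT.connected.mem_support_dfsWalk ((G.dfsWalk r n u).getVert_mem_support (k + 1))
  have := hT.dist_eq_dist_add_one_of_adj r hadj
  unfold IsDescendant at h₁ h₂
  rw [dist_comm, dist_comm (v := u)]
  omega

end DepthFirst

end SimpleGraph

namespace CopsRobber

open SimpleGraph

variable {V : Type*}

lemma obs_fin_one (G : SimpleGraph V) (ℓ : ℕ) (p : Fin 1 → V) (v : V) :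
    obs G ℓ p v = if G.dist (p 0) v ≤ ℓ then some v else none := by
  simp [obs, Fin.exists_fin_one]

lemma length_play_snd (G : SimpleGraph V) (ℓ : ℕ∞) {k : ℕ} (σ : CopStrategy G k) (R : ℕ → V) :
    ∀ t, (play G ℓ σ R t).2.length = 2 * t + 1
  | 0 => rfl
  | t + 1 => by
    simp only [play, List.length_append, List.length_singleton, length_play_snd G ℓ σ R t]
    omega

lemma visCopNumber_eq_one [Nonempty V] {G : SimpleGraph V} {ℓ : ℕ∞} (σ : CopStrategy G 1)
    (hσ : ∀ R, RobberWalk G R → Captures G ℓ σ R) : visCopNumber G ℓ = 1 := by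
  refine le_antisymm (Nat.sInf_le ⟨σ, hσ⟩) (le_csInf ⟨1, σ, hσ⟩ ?_)
  rintro k ⟨τ, hτ⟩
  obtain ⟨v⟩ := ‹Nonempty V›
  obtain ⟨-, i, -⟩ := hτ (fun _ => v) (fun _ => Or.inl rfl)
  exact i.pos

def lastSeen (h : List (Option V)) : Option V :=
  (h.filterMap id).getLast?

lemma lastSeen_singleton (o : Option V) : lastSeen [o] = o := by
  cases o <;> simp [lastSeen]

lemma lastSeen_append_singleton (h : List (Option V)) (o : Option V) :
    lastSeen (h ++ [o]) = o.or (lastSeen h) := by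
  cases o <;> simp [lastSeen, List.getLast?_append]

section OneCop

variable {G : SimpleGraph V} (ℓ : ℕ) (σ : CopStrategy G 1) (R : ℕ → V)

lemma lastSeen_play_zero :
    lastSeen (play G ℓ σ R 0).2 =
      if G.dist (copsAt G ℓ σ R 0 0) (R 0) ≤ ℓ then some (R 0) else none := by
  rw [play, lastSeen_singleton, obs_fin_one]
  rfl

lemma lastSeen_play_succ (t : ℕ) :
    lastSeen (play G ℓ σ R (t + 1)).2 =
      if G.dist (copsAt G ℓ σ R (t + 1) 0) (R (t + 1)) ≤ ℓ then some (R (t + 1))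
      else if G.dist (copsAt G ℓ σ R (t + 1) 0) (R t) ≤ ℓ then some (R t)
      else lastSeen (play G ℓ σ R t).2 := by
  simp only [play, lastSeen_append_singleton, obs_fin_one, copsAt]
  split_ifs <;> rfl

variable {ℓ σ R}

lemma lastSeen_play_of_dist_le {t : ℕ} (h : G.dist (copsAt G ℓ σ R t 0) (R t) ≤ ℓ) :
    lastSeen (play G ℓ σ R t).2 = some (R t) := by
  cases t with
  | zero => rw [lastSeen_play_zero, if_pos h]
  | succ t => rw [lastSeen_play_succ, if_pos h]

lemma lastSeen_play_succ_of_dist_le {t : ℕ}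
    (hf : ¬ G.dist (copsAt G ℓ σ R (t + 1) 0) (R (t + 1)) ≤ ℓ)
    (hs : G.dist (copsAt G ℓ σ R (t + 1) 0) (R t) ≤ ℓ) :
    lastSeen (play G ℓ σ R (t + 1)).2 = some (R t) := by
  rw [lastSeen_play_succ, if_neg hf, if_pos hs]

end OneCop

section Search

variable {T : SimpleGraph V} {r : V} {ℓ : ℕ} {R : ℕ → V}

lemma isDescendant_of_forall_ne (hT : T.IsTree) {u c : V} (hc : T.IsChild r u c)
    (hR : RobberWalk T R) {t₀ L : ℕ} (h₀ : T.IsDescendant r c (R t₀))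
    (hne : ∀ k ≤ L, R (t₀ + k) ≠ u) : ∀ k ≤ L, T.IsDescendant r c (R (t₀ + k))
  | 0, _ => h₀
  | k + 1, hk => by
    have ih := isDescendant_of_forall_ne hT hc hR h₀ hne k (by omega)
    rcases hR (t₀ + k) with h | h
    · rw [← add_assoc, h]
      exact ih
    · exact (hT.isDescendant_or_eq_of_adj hc ih h).resolve_right (hne (k + 1) hk)

/-- A robber who avoids `u` is trapped below one child of `u`, whose block of the walk the
induction handles; at depth `ℓ + 1` the height bound puts the whole subtree within reach. A robber
at `u` is within `ℓ` of the cop, or, if the cop is at depth `ℓ + 1`, of his next position. -/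
theorem exists_dist_le_of_dfsWalk [Fintype V] (hT : T.IsTree)
    (hr : ∀ v, T.dist r v ≤ 2 * ℓ + 1) (hR : RobberWalk T R) {W : ℕ → V} :
    ∀ (n : ℕ) (u : V) (t₀ : ℕ), T.dist r u + n = ℓ + 1 →
      (∀ k ≤ (T.dfsWalk r n u).length, W (t₀ + k) = (T.dfsWalk r n u).getVert k) →
      (∀ k ≤ (T.dfsWalk r n u).length, T.IsDescendant r u (R (t₀ + k))) →
      ∃ t, T.dist (W t) (R t) ≤ ℓ ∨ T.dist (W (t + 1)) (R t) ≤ ℓ := by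
  intro n
  induction n with
  | zero =>
    intro u t₀ hu hW hRu
    have hW₀ : W t₀ = u := by simpa [dfsWalk] using hW 0 le_rfl
    have hRu₀ := hRu 0 (Nat.zero_le _)
    have := hr (R t₀)
    unfold IsDescendant at hRu₀
    refine ⟨t₀, Or.inl ?_⟩
    rw [hW₀]
    simp only [add_zero] at hRu₀
    omega
  | succ n ih =>
    intro u t₀ hu hW hRu
    by_cases hat : ∃ k ≤ (T.dfsWalk r (n + 1) u).length, R (t₀ + k) = u
    · obtain ⟨k, hk, hRk⟩ := hat
      rcases hk.lt_or_eq with hk | rfl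
      · rcases hT.dist_getVert_dfsWalk_le hu hk with h | h
        · exact ⟨t₀ + k, Or.inl (by rwa [hW k hk.le, hRk])⟩
        · exact ⟨t₀ + k, Or.inr (by rwa [add_assoc, hW (k + 1) hk, hRk])⟩
      · exact ⟨_, Or.inl (by rw [hW _ le_rfl, hRk, Walk.getVert_length, dist_self]; omega)⟩
    · push Not at hat
      obtain ⟨c, hc, hcR⟩ := hT.connected.exists_isChild_isDescendant (hRu 0 (Nat.zero_le _))
        (hat 0 (Nat.zero_le _))
      obtain ⟨j, hj, hwj⟩ := (isSubwalk_dfsWalk (n := n) hc).exists_getVert_add_eq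
      refine ih c (t₀ + j) (by have := hc.2; omega) (fun k hk => ?_) (fun k hk => ?_)
      · rw [add_assoc, hW _ (by omega), hwj k hk]
      · rw [add_assoc]
        exact isDescendant_of_forall_ne hT hc hR hcR hat (j + k) (by omega)

theorem add_dist_le_dist_of_chase (hT : T.IsTree) {q x : ℕ → V} (hx : RobberWalk T x)
    (hq : ∀ k, q (k + 1) = hT.connected.stepToward (q k) (x k)) (hne : ∀ k, q k ≠ x k)
    (hswap : ∀ k, q (k + 1) = x k → x (k + 1) ≠ q k) (k : ℕ) :
    k + T.dist (q k) (x k) ≤ T.dist (q 0) (x k) := by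
  induction k with
  | zero => simp
  | succ k ih =>
    have hy := Connected.dist_stepToward_add_one (hG := hT.connected) (hne k)
    rw [← hq k] at hy
    rcases hx k with hstay | hmove
    · rw [hstay]
      omega
    · have hq₀ := hT.connected.dist_le_of_stepToward hq k
      have htri := hT.connected.dist_triangle (u := q 0) (v := q k) (w := x k)
      rcases hT.dist_eq_dist_add_one_of_adj (q (k + 1)) hmove with hcloser | hfarther
      · have := hT.connected.dist_triangle (u := q 0) (v := x (k + 1)) (w := x k)
        rw [dist_comm (u := x (k + 1)), dist_eq_one_iff_adj.mpr hmove] at this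
        omega
      · have := hT.dist_add_one_of_flee (o := q 0) (by omega) (hne k) hmove
          (by rw [← hq k]; exact hswap k) (by rw [← hq k]; omega)
        omega

theorem exists_catch_of_chase (hT : T.IsTree) (hr : ∀ v, T.dist r v ≤ 2 * ℓ + 1) {q x : ℕ → V}
    (hx : RobberWalk T x) (hq : ∀ k, q (k + 1) = hT.connected.stepToward (q k) (x k)) :
    ∃ k, q k = x k ∨ (q (k + 1) = x k ∧ x (k + 1) = q k) := by
  by_contra h
  push Not at h
  have hesc := add_dist_le_dist_of_chase hT hx hq (fun k => (h k).1) (fun k => (h k).2)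
    (4 * ℓ + 2)
  have := hT.connected.dist_triangle (u := q 0) (v := r) (w := x (4 * ℓ + 2))
  have := hT.connected.pos_dist_of_ne (h (4 * ℓ + 2)).1
  have := hr (x (4 * ℓ + 2))
  have := hr (q 0)
  rw [SimpleGraph.dist_comm] at this
  omega

end Search

section Strategy

variable [Fintype V] {T : SimpleGraph V}

/-- The history passed in round `t + 1` has length `2 * t + 1`, so `h.length / 2 + 1 = t + 1`. -/
noncomputable def sweepThenChase (hG : T.Connected) (r : V) (ℓ : ℕ) : CopStrategy T 1 where
  init _ := r
  move h p i := hG.stepToward (p i)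
    ((lastSeen h).getD ((T.dfsWalk r (ℓ + 1) r).getVert (h.length / 2 + 1)))
  valid _ p i := hG.stepToward_eq_or_adj (p i) _

section Play

variable (hG : T.Connected) (r : V) (ℓ : ℕ) (R : ℕ → V)

local notation "cop" => copsAt T ℓ (sweepThenChase hG r ℓ) R
local notation "game" => play T ℓ (sweepThenChase hG r ℓ) R

lemma copsAt_sweepThenChase_succ (t : ℕ) :
    cop (t + 1) 0 = hG.stepToward (cop t 0)
      ((lastSeen (game t).2).getD ((T.dfsWalk r (ℓ + 1) r).getVert (t + 1))) := by
  have ht : (2 * t + 1) / 2 + 1 = t + 1 := by omega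
  simp only [copsAt, play, sweepThenChase, length_play_snd, ht]

lemma copsAt_sweepThenChase_succ_of_lastSeen {t : ℕ} {x : V}
    (hx : lastSeen (game t).2 = some x) :
    cop (t + 1) 0 = hG.stepToward (cop t 0) x := by
  rw [copsAt_sweepThenChase_succ, hx, Option.getD_some]

variable {r ℓ R}

lemma sweepThenChase_fresh_succ (hR : RobberWalk T R) {t : ℕ} (hne : cop t 0 ≠ R t)
    (h : T.dist (cop t 0) (R t) ≤ ℓ) :
    cop (t + 1) 0 = hG.stepToward (cop t 0) (R t) ∧ T.dist (cop (t + 1) 0) (R (t + 1)) ≤ ℓ := by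
  have hstep := copsAt_sweepThenChase_succ_of_lastSeen hG r ℓ R (lastSeen_play_of_dist_le h)
  rw [hstep]
  exact ⟨rfl, (Connected.dist_stepToward_le hne (hR t)).trans h⟩

lemma sweepThenChase_stale_succ (hR : RobberWalk T R) {t : ℕ} (hne : cop (t + 1) 0 ≠ R t)
    (hf : ¬ T.dist (cop (t + 1) 0) (R (t + 1)) ≤ ℓ) (h : T.dist (cop (t + 1) 0) (R t) ≤ ℓ) :
    cop (t + 2) 0 = hG.stepToward (cop (t + 1) 0) (R t) ∧
      T.dist (cop (t + 2) 0) (R (t + 1)) ≤ ℓ := by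
  have hstep :=
    copsAt_sweepThenChase_succ_of_lastSeen hG r ℓ R (lastSeen_play_succ_of_dist_le hf h)
  rw [hstep]
  exact ⟨rfl, (Connected.dist_stepToward_le hne (hR t)).trans h⟩

end Play

section Capture

variable (hT : T.IsTree) {r : V} {ℓ : ℕ} {R : ℕ → V}

local notation "cop" => copsAt T ℓ (sweepThenChase hT.connected r ℓ) R
local notation "game" => play T ℓ (sweepThenChase hT.connected r ℓ) R

theorem exists_dist_le_sweepThenChase (hr : ∀ v, T.dist r v ≤ 2 * ℓ + 1)
    (hR : RobberWalk T R) :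
    ∃ t, T.dist (cop t 0) (R t) ≤ ℓ ∨ T.dist (cop (t + 1) 0) (R t) ≤ ℓ := by
  by_contra h
  push Not at h
  have hnone : ∀ t, lastSeen (game t).2 = none := by
    intro t
    induction t with
    | zero => rw [lastSeen_play_zero, if_neg (h 0).1.not_ge]
    | succ t ih =>
      rw [lastSeen_play_succ, if_neg (h (t + 1)).1.not_ge, if_neg (h t).2.not_ge, ih]
  have hfollow : ∀ t, cop t 0 = (T.dfsWalk r (ℓ + 1) r).getVert t := by
    intro t
    induction t with
    | zero => exact (Walk.getVert_zero _).symm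
    | succ t ih =>
      rw [copsAt_sweepThenChase_succ, hnone t, Option.getD_none, ih]
      rcases Walk.getVert_succ_eq_or_adj (T.dfsWalk r (ℓ + 1) r) t with h | h
      · rw [h, Connected.stepToward_self]
      · exact Connected.stepToward_of_adj h
  obtain ⟨t, ht⟩ := exists_dist_le_of_dfsWalk hT hr hR (W := fun t => cop t 0) (ℓ + 1) r 0
    (by simp) (fun k _ => by rw [zero_add, hfollow]) (fun k _ => isDescendant_root r _)
  rcases ht with ht | ht
  · exact (h t).1.not_ge ht
  · exact (h t).2.not_ge ht

theorem sweepThenChase_captures (hr : ∀ v, T.dist r v ≤ 2 * ℓ + 1) (hR : RobberWalk T R) :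
    Captures T ℓ (sweepThenChase hT.connected r ℓ) R := by
  by_contra hcap
  have h₁ : ∀ t, cop t 0 ≠ R t := fun t h => hcap ⟨t, 0, Or.inl h⟩
  have h₂ : ∀ t, cop (t + 1) 0 ≠ R t := fun t h => hcap ⟨t, 0, Or.inr h⟩
  by_cases hfresh : ∃ t, T.dist (cop t 0) (R t) ≤ ℓ
  · obtain ⟨t₀, h₀⟩ := hfresh
    have hf : ∀ k, T.dist (cop (t₀ + k) 0) (R (t₀ + k)) ≤ ℓ := fun k => by
      induction k with
      | zero => exact h₀
      | succ k ih => exact (sweepThenChase_fresh_succ _ hR (h₁ _) ih).2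
    obtain ⟨k, hk | ⟨hk, -⟩⟩ := exists_catch_of_chase hT hr (q := fun k => cop (t₀ + k) 0)
      (x := fun k => R (t₀ + k)) (fun k => hR _)
      (fun k => (sweepThenChase_fresh_succ _ hR (h₁ _) (hf k)).1)
    · exact h₁ _ hk
    · exact h₂ _ hk
  · push Not at hfresh
    obtain ⟨s, hs⟩ : ∃ s, T.dist (cop (s + 1) 0) (R s) ≤ ℓ := by
      obtain ⟨t, ht | ht⟩ := exists_dist_le_sweepThenChase hT hr hR
      · exact absurd ht (hfresh t).not_ge
      · exact ⟨t, ht⟩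
    have hst : ∀ k, T.dist (cop (s + k + 1) 0) (R (s + k)) ≤ ℓ := fun k => by
      induction k with
      | zero => exact hs
      | succ k ih => exact (sweepThenChase_stale_succ _ hR (h₂ _) (hfresh _).not_ge ih).2
    obtain ⟨k, hk | ⟨-, hk⟩⟩ := exists_catch_of_chase hT hr (q := fun k => cop (s + k + 1) 0)
      (x := fun k => R (s + k)) (fun k => hR _)
      (fun k => (sweepThenChase_stale_succ _ hR (h₂ _) (hfresh _).not_ge (hst k)).1)
    · exact h₂ _ hk
    · exact h₁ _ hk.symm

end Capture

end Strategy

end CopsRobber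

open CopsRobber in
/-- if `T` is a tree of height at most `2ℓ+1` (some root has eccentricity at
most `2ℓ+1`), then `c_ℓ(T) = 1`. -/
theorem tree_small_height_visCopNumber {V : Type*} [Fintype V] (T : SimpleGraph V)
    (hT : T.IsTree) (ℓ : ℕ) (hr : ∃ r : V, ∀ u : V, T.dist r u ≤ 2 * ℓ + 1) :
    visCopNumber T (ℓ : ℕ∞) = 1 := by
  obtain ⟨r, hr⟩ := hr
  have : Nonempty V := ⟨r⟩
  exact visCopNumber_eq_one _ fun R hR => sweepThenChase_captures hT hr hR
end
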